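/- Let Σ be a finite alphabet with |Σ| = r ≥ 2 and let a ∈ Σ. The ω-language L = {x ∈ Σ^ω : ∃ N, ∀ n ≥ N, x n = a} (the language of the formula FG a) has Hausdorff dimension 0, even though the number of its length-n prefixes is r^n for every n (so its entropy is 1). -/

import Mathlib

open Filter MeasureTheory Set
open scoped ENNReal

open scoped Classical in
noncomputable def wedist {α : Type*} [Fintype α] (u v : ℕ → α) : ℝ≥0∞ :=
  if u = v then 0 else ((Fintype.card α : ℝ≥0∞))⁻¹ ^ (PiNat.firstDiff u v)

/-- The metric space on `ℕ → α` with `d(u,v) = r^{-n}`, `r = |α|`,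
`n` the length of the longest common prefix. -/
noncomputable def wspace (α : Type*) [Fintype α] : EMetricSpace (ℕ → α) where
  edist := wedist
  edist_self u := by simp [wedist]
  edist_comm u v := by
    rcases eq_or_ne u v with h | h
    · simp [wedist, h]
    · simp only [wedist, if_neg h, if_neg h.symm, PiNat.firstDiff_comm]
  edist_triangle u v w := by
    rcases eq_or_ne u w with huw | huw
    · simp [wedist, huw]
    · rcases eq_or_ne u v with huv | huv
      · subst huv; simp [wedist]
      · rcases eq_or_ne v w with hvw | hvw
        · subst hvw; simp [wedist, huw]
        · have hne : Nonempty α := ⟨u 0⟩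
          have hq : ((Fintype.card α : ℝ≥0∞))⁻¹ ≤ 1 := by
            rw [ENNReal.inv_le_one]
            exact_mod_cast Nat.one_le_iff_ne_zero.mpr Fintype.card_ne_zero
          have hmin := PiNat.min_firstDiff_le u v w huw
          simp only [wedist, if_neg huw, if_neg huv, if_neg hvw]
          calc ((Fintype.card α : ℝ≥0∞))⁻¹ ^ PiNat.firstDiff u w
              ≤ ((Fintype.card α : ℝ≥0∞))⁻¹ ^
                  (min (PiNat.firstDiff u v) (PiNat.firstDiff v w)) :=
                pow_le_pow_of_le_one (by positivity) hq hmin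
            _ ≤ _ := by
                rcases min_cases (PiNat.firstDiff u v) (PiNat.firstDiff v w) with ⟨h1, _⟩ | ⟨h1, _⟩ <;> rw [h1]
                · exact le_self_add
                · exact le_add_self
  eq_of_edist_eq_zero := by
    intro u v h
    by_contra hne
    simp only [wedist, if_neg hne] at h
    exact pow_ne_zero _ (ENNReal.inv_ne_zero.mpr (ENNReal.natCast_ne_top _)) h

/-- Hausdorff dimension of an ω-language in the metric `d(u,v) = |α|^{-(common prefix length)}`. -/
noncomputable def wdimH {α : Type*} [Fintype α] (L : Set (ℕ → α)) : ℝ≥0∞ :=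
  @dimH _ (wspace α) L

/-- The set of length-`n` prefixes of words of `L`. -/
def prefixSet {α : Type*} [Fintype α] (L : Set (ℕ → α)) (n : ℕ) : Set (Fin n → α) :=
  {w | ∃ x ∈ L, ∀ i : Fin n, x i.1 = w i}

/-- Entropy of an ω-language: `limsup (1/n) log_r |A_n(L)|`. -/
noncomputable def entropy {α : Type*} [Fintype α] (L : Set (ℕ → α)) : ℝ :=
  Filter.limsup (fun n : ℕ =>
    Real.logb (Fintype.card α) ((prefixSet L n).ncard) / n) Filter.atTop

theorem dimH_FG_zero {α : Type*} [Fintype α] (hcard : 2 ≤ Fintype.card α) (a : α) :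
    wdimH {x : ℕ → α | ∃ N, ∀ n ≥ N, x n = a} = 0 ∧
      (∀ n : ℕ, (prefixSet {x : ℕ → α | ∃ N, ∀ n ≥ N, x n = a} n).ncard =
        Fintype.card α ^ n) ∧
      entropy {x : ℕ → α | ∃ N, ∀ n ≥ N, x n = a} = 1 := by
  set L := {x : ℕ → α | ∃ N, ∀ n ≥ N, x n = a} with hL
  have hone : (1 : ℝ) < Fintype.card α := by exact_mod_cast hcard.trans_lt' one_lt_two
  have hcount : L.Countable := by
    have hEq : L = ⋃ N : ℕ, {x : ℕ → α | ∀ n ≥ N, x n = a} := by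
      ext x; simp [hL]
    rw [hEq]
    refine Set.countable_iUnion fun N => Set.Finite.countable ?_
    apply Set.Finite.of_finite_image (f := fun (x : ℕ → α) (i : Fin N) => x i.1)
    · exact Set.finite_univ.subset (Set.subset_univ _)
    · intro x hx y hy hxy
      funext m
      rcases lt_or_ge m N with h | h
      · exact congrFun hxy ⟨m, h⟩
      · rw [hx m h, hy m h]
  have hpre : ∀ n : ℕ, (prefixSet L n).ncard = Fintype.card α ^ n := by
    intro n
    have huniv : prefixSet L n = Set.univ := by
      ext w
      simp only [prefixSet, Set.mem_setOf_eq, Set.mem_univ, iff_true]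
      refine ⟨fun m => if h : m < n then w ⟨m, h⟩ else a, ⟨n, fun m hm => by
        simp [Nat.not_lt.mpr hm]⟩, fun i => by simp [i.2]⟩
    rw [huniv, Set.ncard_univ, Nat.card_eq_fintype_card]
    simp [Fintype.card_fun]
  refine ⟨?_, hpre, ?_⟩
  · exact @dimH_countable _ (wspace α) _ hcount
  · unfold entropy
    have h1 : ∀ᶠ n : ℕ in atTop,
        Real.logb (Fintype.card α) ((prefixSet L n).ncard) / n = 1 := by
      filter_upwards [eventually_ge_atTop 1] with n hn1
      rw [hpre n]
      push_cast
      rw [Real.logb_pow, Real.logb_self_eq_one hone]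
      field_simp
    rw [Filter.limsup_congr h1, Filter.limsup_const]
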